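/- arXiv:2001.00617 — 4 statements merged into one kernel-verified Lean document; each statement's English description precedes it below -/
import Mathlib

section
/- Let K : X → Y be compact, ν, ρ > 0, and X_{ν,ρ} := {|K|^ν w : ‖w‖ ≤ ρ}. Then for every δ > 0, the conditional stability modulus satisfies sup{‖x‖ : x ∈ X_{ν,ρ}, ‖Kx‖ ≤ δ} ≤ δ^{ν/(ν+1)} ρ^{1/(ν+1)}. -/
open scoped InnerProductSpace

/-!
Write `aᵢ = ⟪w, vᵢ⟫`. Parseval's identity gives `‖|K|^ν w‖² = ∑ σᵢ^{2ν} aᵢ²` and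
`‖K |K|^ν w‖² = ∑ σᵢ^{2ν+2} aᵢ²`, and Bessel's inequality gives `∑ aᵢ² ≤ ‖w‖²`. Since
`σ^{2ν} a² = (σ^{2ν+2} a²)^{ν/(ν+1)} (a²)^{1/(ν+1)}`, Hölder's inequality with exponents
`(ν+1)/ν` and `ν+1` yields the interpolation inequality
`‖|K|^ν w‖ ≤ ‖K |K|^ν w‖^{ν/(ν+1)} ‖w‖^{1/(ν+1)}`, and the bound follows by monotonicity.
-/

section Orthonormal

variable {ι E : Type*} [NormedAddCommGroup E] [InnerProductSpace ℝ E] {e : ι → E} {c : ι → ℝ}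
  {x : E}

theorem Orthonormal.inner_eq_of_hasSum (he : Orthonormal ℝ e)
    (h : HasSum (fun i => c i • e i) x) (j : ι) : ⟪x, e j⟫_ℝ = c j := by
  have hsum := (innerSL ℝ (e j)).hasSum h
  simp only [innerSL_apply_apply, real_inner_smul_right] at hsum
  have hsingle : HasSum (fun i => c i * ⟪e j, e i⟫_ℝ) (c j * ⟪e j, e j⟫_ℝ) :=
    hasSum_single j fun i hij => by rw [he.inner_eq_zero hij.symm, mul_zero]
  rw [real_inner_comm, hsum.unique hsingle, real_inner_self_eq_norm_sq, he.norm_eq_one]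
  ring

theorem Orthonormal.hasSum_sq_of_hasSum (he : Orthonormal ℝ e)
    (h : HasSum (fun i => c i • e i) x) : HasSum (fun i => c i ^ 2) (‖x‖ ^ 2) := by
  have := (innerSL ℝ x).hasSum h
  simp only [innerSL_apply_apply, real_inner_smul_right, he.inner_eq_of_hasSum h,
    real_inner_self_eq_norm_sq] at this
  simpa only [sq] using this

end Orthonormal

theorem tsum_rpow_mul_rpow_le {ι : Type*} {f g : ι → ℝ} (hf : ∀ i, 0 ≤ f i) (hg : ∀ i, 0 ≤ g i)
    (hf_sum : Summable f) (hg_sum : Summable g) {p q : ℝ} (hp : 0 < p) (hq : 0 < q)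
    (hpq : p + q = 1) :
    ∑' i, f i ^ p * g i ^ q ≤ (∑' i, f i) ^ p * (∑' i, g i) ^ q := by
  have hconj := Real.HolderConjugate.inv_inv hp hq hpq
  have H := Real.inner_le_Lp_mul_Lq_tsum_of_nonneg hconj
    (fun i => Real.rpow_nonneg (hf i) p) (fun i => Real.rpow_nonneg (hg i) q)
    (by simpa only [Real.rpow_rpow_inv (hf _) hp.ne'] using hf_sum)
    (by simpa only [Real.rpow_rpow_inv (hg _) hq.ne'] using hg_sum)
  simpa only [Real.rpow_rpow_inv (hf _) hp.ne', Real.rpow_rpow_inv (hg _) hq.ne', one_div,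
    inv_inv] using H

theorem rpow_mul_eq_rpow_add_one_mul_rpow {t c ν : ℝ} (ht : 0 ≤ t) (hc : 0 ≤ c)
    (hν : ν + 1 ≠ 0) :
    t ^ ν * c = (t ^ (ν + 1) * c) ^ (ν / (ν + 1)) * c ^ (1 / (ν + 1)) := by
  rw [Real.mul_rpow (Real.rpow_nonneg ht _) hc, ← Real.rpow_mul ht, mul_assoc,
    ← Real.rpow_add' hc (by rw [← add_div, div_self hν]; exact one_ne_zero),
    mul_div_cancel₀ _ hν, ← add_div, div_self hν, Real.rpow_one]

theorem norm_le_norm_apply_rpow_mul_norm_rpow {ι X Y : Type*} [NormedAddCommGroup X]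
    [InnerProductSpace ℝ X] [NormedAddCommGroup Y] [InnerProductSpace ℝ Y] (K : X →L[ℝ] Y)
    {σ : ι → ℝ} {u : ι → Y} {v : ι → X} (hσ : ∀ i, 0 ≤ σ i) (hu : Orthonormal ℝ u)
    (hv : Orthonormal ℝ v) (hsvd : ∀ x : X, HasSum (fun i => (σ i * ⟪x, v i⟫_ℝ) • u i) (K x))
    {ν : ℝ} (hν : 0 < ν) {A : X → X}
    (hA : ∀ w : X, HasSum (fun i => (σ i ^ ν * ⟪w, v i⟫_ℝ) • v i) (A w)) (w : X) :
    ‖A w‖ ≤ ‖K (A w)‖ ^ (ν / (ν + 1)) * ‖w‖ ^ (1 / (ν + 1)) := by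
  set a : ι → ℝ := fun i => ⟪w, v i⟫_ℝ
  have hAw : HasSum (fun i => (σ i ^ ν * a i) ^ 2) (‖A w‖ ^ 2) :=
    hv.hasSum_sq_of_hasSum (hA w)
  have hKAw : HasSum (fun i => (σ i * (σ i ^ ν * a i)) ^ 2) (‖K (A w)‖ ^ 2) := by
    refine hu.hasSum_sq_of_hasSum ?_
    simpa only [hv.inner_eq_of_hasSum (hA w)] using hsvd (A w)
  have hbessel : ∑' i, a i ^ 2 ≤ ‖w‖ ^ 2 := by
    simpa only [Real.norm_eq_abs, sq_abs, real_inner_comm] using hv.tsum_inner_products_le w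
  have ha : Summable fun i => a i ^ 2 := by
    simpa only [Real.norm_eq_abs, sq_abs, real_inner_comm] using hv.inner_products_summable w
  have hν₁ : ν + 1 ≠ 0 := by positivity
  have hpoint : ∀ i, (σ i ^ ν * a i) ^ 2 =
      ((σ i * (σ i ^ ν * a i)) ^ 2) ^ (ν / (ν + 1)) * (a i ^ 2) ^ (1 / (ν + 1)) := by
    intro i
    have h := rpow_mul_eq_rpow_add_one_mul_rpow (sq_nonneg (σ i)) (sq_nonneg (a i)) hν₁
    rw [mul_left_comm (σ i), ← mul_assoc]
    rwa [← Real.rpow_pow_comm (hσ i), ← Real.rpow_pow_comm (hσ i), Real.rpow_add_one' (hσ i) hν₁,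
      ← mul_pow, ← mul_pow] at h
  have hsq : ‖A w‖ ^ 2 ≤ (‖K (A w)‖ ^ (ν / (ν + 1)) * ‖w‖ ^ (1 / (ν + 1))) ^ 2 :=
    calc ‖A w‖ ^ 2
        = ∑' i, ((σ i * (σ i ^ ν * a i)) ^ 2) ^ (ν / (ν + 1)) * (a i ^ 2) ^ (1 / (ν + 1)) := by
          rw [← hAw.tsum_eq]; exact tsum_congr hpoint
      _ ≤ (‖K (A w)‖ ^ 2) ^ (ν / (ν + 1)) * (∑' i, a i ^ 2) ^ (1 / (ν + 1)) := by
          rw [← hKAw.tsum_eq]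
          exact tsum_rpow_mul_rpow_le (fun i => sq_nonneg _) (fun i => sq_nonneg _)
            hKAw.summable ha (by positivity) (by positivity) (by rw [← add_div, div_self hν₁])
      _ ≤ (‖K (A w)‖ ^ 2) ^ (ν / (ν + 1)) * (‖w‖ ^ 2) ^ (1 / (ν + 1)) := by
          gcongr
      _ = (‖K (A w)‖ ^ (ν / (ν + 1)) * ‖w‖ ^ (1 / (ν + 1))) ^ 2 := by
          rw [mul_pow, Real.rpow_pow_comm (norm_nonneg _), Real.rpow_pow_comm (norm_nonneg _)]
  exact (pow_le_pow_iff_left₀ (norm_nonneg _) (by positivity) two_ne_zero).mp hsq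

theorem conditional_stability_source_set_general
    {X Y : Type*} [NormedAddCommGroup X] [InnerProductSpace ℝ X]
    [NormedAddCommGroup Y] [InnerProductSpace ℝ Y]
    (K : X →L[ℝ] Y)
    (σ : ℕ → ℝ) (u : ℕ → Y) (v : ℕ → X)
    (hσ : ∀ n, 0 < σ n) (hu : Orthonormal ℝ u) (hv : Orthonormal ℝ v)
    (hsvd : ∀ x : X, HasSum (fun n => (σ n * ⟪x, v n⟫_ℝ) • u n) (K x))
    (ν ρ : ℝ) (hν : 0 < ν)
    (A : X → X)
    (hA : ∀ w : X, HasSum (fun n => (σ n ^ ν * ⟪w, v n⟫_ℝ) • v n) (A w))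
    (δ : ℝ) :
    ∀ x : X, (∃ w : X, ‖w‖ ≤ ρ ∧ A w = x) → ‖K x‖ ≤ δ →
      ‖x‖ ≤ δ ^ (ν / (ν + 1)) * ρ ^ (1 / (ν + 1)) := by
  rintro _ ⟨w, hw, rfl⟩ hKx
  calc ‖A w‖ ≤ ‖K (A w)‖ ^ (ν / (ν + 1)) * ‖w‖ ^ (1 / (ν + 1)) :=
        norm_le_norm_apply_rpow_mul_norm_rpow K (fun n => (hσ n).le) hu hv hsvd hν hA w
    _ ≤ δ ^ (ν / (ν + 1)) * ρ ^ (1 / (ν + 1)) := by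
        have hδ : 0 ≤ δ := (norm_nonneg _).trans hKx
        gcongr

/-- Conditional stability: for a compact operator `K` with singular system `(σₙ, uₙ, vₙ)`
and `|K|^ν w := ∑ₙ σₙ^ν ⟨w, vₙ⟩ vₙ`, every `x ∈ X_{ν,ρ} = {|K|^ν w : ‖w‖ ≤ ρ}` with
`‖K x‖ ≤ δ` satisfies `‖x‖ ≤ δ^(ν/(ν+1)) ρ^(1/(ν+1))`. -/
theorem conditional_stability_source_set
    {X Y : Type*} [NormedAddCommGroup X] [InnerProductSpace ℝ X] [CompleteSpace X]
    [NormedAddCommGroup Y] [InnerProductSpace ℝ Y] [CompleteSpace Y]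
    (K : X →L[ℝ] Y) (hK : IsCompactOperator ⇑K)
    (σ : ℕ → ℝ) (u : ℕ → Y) (v : ℕ → X)
    (hσ : ∀ n, 0 < σ n) (hu : Orthonormal ℝ u) (hv : Orthonormal ℝ v)
    (hsvd : ∀ x : X, HasSum (fun n => (σ n * ⟪x, v n⟫_ℝ) • u n) (K x))
    (ν ρ : ℝ) (hν : 0 < ν) (hρ : 0 < ρ)
    (A : X → X)
    (hA : ∀ w : X, HasSum (fun n => (σ n ^ ν * ⟪w, v n⟫_ℝ) • v n) (A w))
    (δ : ℝ) (hδ : 0 < δ) :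
    ∀ x : X, (∃ w : X, ‖w‖ ≤ ρ ∧ A w = x) → ‖K x‖ ≤ δ →
      ‖x‖ ≤ δ ^ (ν / (ν + 1)) * ρ ^ (1 / (ν + 1)) :=
  conditional_stability_source_set_general K σ u v hσ hu hv hsvd ν ρ hν A hA δ
end

section
/- Bakushinskiĭ veto: let T† : D → X be a linear map on a dense subspace D ⊆ Y, and {R_α} a family of maps Y → X. Suppose there is a parameter choice α : Y → (0,∞) depending only on the data such that for every y ∈ D, sup_{y' ∈ B_δ(y)} ‖R_{α(y')} y' − T† y‖ → 0 as δ → 0. Then T† is continuous on D. -/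
/-- Bakushinskiĭ veto: if a regularization with a heuristic (noise-level-free) parameter
choice `α : Y → (0,∞)` satisfies the worst-case convergence condition on a dense subspace
`D`, then `T† : D → X` is continuous. -/
theorem bakushinskii_veto
    {Y X : Type*} [NormedAddCommGroup Y] [NormedSpace ℝ Y]
    [NormedAddCommGroup X] [NormedSpace ℝ X]
    (D : Submodule ℝ Y) (hD : Dense (D : Set Y))
    (Tdag : D →ₗ[ℝ] X)
    (R : ℝ → Y → X) (α : Y → ℝ) (hα : ∀ y : Y, 0 < α y)
    (hconv : ∀ y : D, ∀ ε > (0:ℝ), ∃ δ > (0:ℝ), ∀ y' : Y,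
      ‖y' - (y : Y)‖ ≤ δ → ‖R (α y') y' - Tdag y‖ ≤ ε) :
    Continuous Tdag := by
  rw [continuous_iff_continuousAt]
  intro y
  rw [Metric.continuousAt_iff]
  intro ε hε
  obtain ⟨δ, hδ, h1⟩ := hconv y (ε/3) (by linarith)
  refine ⟨δ, hδ, fun z hz => ?_⟩
  have hzy : ‖(z : Y) - (y : Y)‖ ≤ δ := by
    rw [Subtype.dist_eq, dist_eq_norm] at hz
    exact le_of_lt hz
  obtain ⟨δ', hδ', h2⟩ := hconv z (ε/3) (by linarith)
  have hA : ‖R (α (z : Y)) (z : Y) - Tdag y‖ ≤ ε/3 := h1 z hzy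
  have hB : ‖R (α (z : Y)) (z : Y) - Tdag z‖ ≤ ε/3 := by
    apply h2
    simp [le_of_lt hδ']
  have : dist (Tdag z) (Tdag y) ≤ ε/3 + ε/3 := by
    rw [dist_eq_norm]
    calc ‖Tdag z - Tdag y‖
        = ‖(Tdag z - R (α (z : Y)) (z : Y)) + (R (α (z : Y)) (z : Y) - Tdag y)‖ := by abel_nf
      _ ≤ ‖Tdag z - R (α (z : Y)) (z : Y)‖ + ‖R (α (z : Y)) (z : Y) - Tdag y‖ :=
          norm_add_le _ _
      _ ≤ ε/3 + ε/3 := by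
          gcongr
          rw [norm_sub_rev]; exact hB
  linarith
end

section
/- Landweber error decrease: let K : X → Y be bounded linear with ω := 1 and ‖K‖ ≤ 1, let x† satisfy ‖Kx† − y^δ‖ ≤ δ' and let x_m ∈ X with ‖Kx_m − y^δ‖ > 2δ'. Then the next Landweber iterate x_{m+1} = x_m + K*(y^δ − Kx_m) satisfies ‖x_{m+1} − x†‖ < ‖x_m − x†‖. -/
/-!
Write `e = x_m - x†` and `r = K x_m - y^δ`, so that `x_{m+1} - x† = e - K* r`. Expanding the
square, the error decreases as soon as `‖K* r‖² < 2 ⟪e, K* r⟫ = 2 ⟪K e, r⟫`. Since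
`K e = r - (K x† - y^δ)`, the right-hand side is at least `2 ‖r‖ (‖r‖ - δ')`, while
`‖K* r‖ ≤ ‖r‖` because `‖K*‖ = ‖K‖ ≤ 1`; and `‖r‖² < 2 ‖r‖ (‖r‖ - δ')` is exactly `‖r‖ > 2δ'`.
-/

open ContinuousLinearMap

open scoped RealInnerProductSpace

theorem norm_sub_lt_norm_of_sq_norm_lt_two_inner {E : Type*} [NormedAddCommGroup E]
    [InnerProductSpace ℝ E] {e a : E} (h : ‖a‖ ^ 2 < 2 * ⟪e, a⟫) : ‖e - a‖ < ‖e‖ := by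
  have hsq : ‖e - a‖ ^ 2 < ‖e‖ ^ 2 := by
    rw [norm_sub_sq_real]
    linarith
  exact lt_of_pow_lt_pow_left₀ 2 (norm_nonneg e) hsq

section Adjoint

variable {X Y : Type*} [NormedAddCommGroup X] [InnerProductSpace ℝ X] [CompleteSpace X]
  [NormedAddCommGroup Y] [InnerProductSpace ℝ Y] [CompleteSpace Y]

theorem norm_adjoint_apply_le_of_norm_le_one {K : X →L[ℝ] Y} (hK : ‖K‖ ≤ 1) (r : Y) :
    ‖adjoint K r‖ ≤ ‖r‖ := by
  simpa using (adjoint K).le_of_opNorm_le (c := 1) (by rwa [LinearIsometryEquiv.norm_map]) r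

theorem sq_norm_residual_sub_le_inner_adjoint (K : X →L[ℝ] Y) (x x' : X) (y : Y) :
    ‖K x - y‖ ^ 2 - ‖K x' - y‖ * ‖K x - y‖ ≤ ⟪x - x', adjoint K (K x - y)⟫ := by
  have hKe : K (x - x') = (K x - y) - (K x' - y) := by
    rw [map_sub]
    abel
  rw [adjoint_inner_right, hKe, inner_sub_left, real_inner_self_eq_norm_sq]
  linarith [real_inner_le_norm (K x' - y) (K x - y)]

end Adjoint

/-- Landweber error decrease: if `‖K‖ ≤ 1`, `‖K x† - y^δ‖ ≤ δ'` and the residual of the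
current iterate satisfies `‖K x_m - y^δ‖ > 2δ'`, then the next Landweber iterate
`x_{m+1} = x_m + K*(y^δ - K x_m)` is strictly closer to `x†`. -/
theorem landweber_error_decrease
    {X Y : Type*} [NormedAddCommGroup X] [InnerProductSpace ℝ X] [CompleteSpace X]
    [NormedAddCommGroup Y] [InnerProductSpace ℝ Y] [CompleteSpace Y]
    (K : X →L[ℝ] Y) (hK : ‖K‖ ≤ 1)
    (xdag xm : X) (yδ : Y) (δ' : ℝ)
    (hnoise : ‖K xdag - yδ‖ ≤ δ')
    (hres : 2 * δ' < ‖K xm - yδ‖) :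
    ‖xm + ContinuousLinearMap.adjoint K (yδ - K xm) - xdag‖ < ‖xm - xdag‖ := by
  have hstep : xm + adjoint K (yδ - K xm) - xdag = (xm - xdag) - adjoint K (K xm - yδ) := by
    rw [← neg_sub (K xm), map_neg]
    abel
  rw [hstep]
  apply norm_sub_lt_norm_of_sq_norm_lt_two_inner
  have hres_pos : 0 < ‖K xm - yδ‖ := by linarith [(norm_nonneg _).trans hnoise]
  calc ‖adjoint K (K xm - yδ)‖ ^ 2 ≤ ‖K xm - yδ‖ ^ 2 := by
        gcongr
        exact norm_adjoint_apply_le_of_norm_le_one hK _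
    _ < 2 * (‖K xm - yδ‖ ^ 2 - δ' * ‖K xm - yδ‖) := by nlinarith
    _ ≤ 2 * (‖K xm - yδ‖ ^ 2 - ‖K xdag - yδ‖ * ‖K xm - yδ‖) := by gcongr
    _ ≤ 2 * ⟪xm - xdag, adjoint K (K xm - yδ)⟫ := by
        gcongr
        exact sq_norm_residual_sub_le_inner_adjoint K xm xdag yδ
end

section
/- Dual least-squares projection identity: let T : X → Y be bounded linear between Hilbert spaces, Y_n ⊆ closure(R(T)) a finite-dimensional subspace, Q_n the orthogonal projection onto Y_n, T_n := Q_n ∘ T, X_n := T*(Y_n), and P_n the orthogonal projection onto X_n. If y = Tx† with x† ∈ N(T)^⊥, then the minimum norm solution x_n of T_n x = Q_n y equals P_n x†. -/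
/-! Since `Q_n y = T_n x†`, the least-squares solutions of `T_n x = Q_n y` are exactly the
points of `x† + N(T_n)`, and `N(T_n) = T*(Y_n)ᗮ = X_nᗮ`. By Pythagoras, the element of minimal
norm in the affine space `x† + X_nᗮ` is `P_n x†`. -/

open ContinuousLinearMap

section

variable {𝕜 E : Type*} [RCLike 𝕜] [NormedAddCommGroup E] [InnerProductSpace 𝕜 E]

theorem Submodule.eq_starProjection_of_norm_le (K : Submodule 𝕜 E) [K.HasOrthogonalProjection]
    {x x₀ : E} (hx : x - x₀ ∈ Kᗮ) (hmin : ∀ w, w - x₀ ∈ Kᗮ → ‖x‖ ≤ ‖w‖) :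
    x = K.starProjection x₀ := by
  set m := K.starProjection x₀
  have hm : m - x₀ ∈ Kᗮ := by
    rw [← neg_mem_iff, neg_sub]
    exact K.sub_starProjection_mem_orthogonal x₀
  have hxm : x - m ∈ Kᗮ := by simpa using Kᗮ.sub_mem hx hm
  have hpyth : ‖x‖ * ‖x‖ = ‖x - m‖ * ‖x - m‖ + ‖m‖ * ‖m‖ := by
    simpa using norm_add_sq_eq_norm_sq_add_norm_sq_of_inner_eq_zero (x - m) m
      (Submodule.inner_left_of_mem_orthogonal (K.starProjection_apply_mem x₀) hxm)
  have hdist : ‖x - m‖ = 0 := by nlinarith [hmin m hm, norm_nonneg x, norm_nonneg (x - m)]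
  rwa [norm_eq_zero, sub_eq_zero] at hdist

variable {F : Type*} [NormedAddCommGroup F] [InnerProductSpace 𝕜 F] [CompleteSpace E]
  [CompleteSpace F]

theorem Submodule.orthogonal_map_adjoint (T : E →L[𝕜] F) (K : Submodule 𝕜 F) :
    (K.map (adjoint T : F →ₗ[𝕜] E))ᗮ = Kᗮ.comap (T : E →ₗ[𝕜] F) := by
  ext u
  simp only [Submodule.mem_orthogonal', Submodule.mem_map, Submodule.mem_comap, coe_coe,
    forall_exists_index, and_imp, forall_apply_eq_imp_iff₂, adjoint_inner_right]

theorem Submodule.ker_starProjection_comp (T : E →L[𝕜] F) (K : Submodule 𝕜 F)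
    [K.HasOrthogonalProjection] :
    (K.starProjection ∘L T).ker = (K.map (adjoint T : F →ₗ[𝕜] E))ᗮ := by
  rw [toLinearMap_comp, LinearMap.ker_comp, Submodule.ker_starProjection,
    Submodule.orthogonal_map_adjoint]

end

theorem dual_least_squares_projection_general
    {X Y : Type*} [NormedAddCommGroup X] [InnerProductSpace ℝ X] [CompleteSpace X]
    [NormedAddCommGroup Y] [InnerProductSpace ℝ Y] [CompleteSpace Y]
    (T : X →L[ℝ] Y)
    (Yn : Submodule ℝ Y) [FiniteDimensional ℝ Yn]
    (Xn : Submodule ℝ X) [FiniteDimensional ℝ Xn]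
    (hXn : Xn = Submodule.map (ContinuousLinearMap.adjoint T : Y →ₗ[ℝ] X) Yn)
    (xdag : X)
    (y : Y) (hy : y = T xdag)
    (Qn : Y →L[ℝ] Y) (hQn : ∀ w : Y, Qn w = (Submodule.orthogonalProjectionOnto Yn w : Y))
    (Tn : X →L[ℝ] Y) (hTn : Tn = Qn.comp T)
    (xn : X)
    (hls : ∀ w : X, ‖Tn xn - Qn y‖ ≤ ‖Tn w - Qn y‖)
    (hmn : ∀ w : X, (∀ w' : X, ‖Tn w - Qn y‖ ≤ ‖Tn w' - Qn y‖) → ‖xn‖ ≤ ‖w‖) :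
    xn = (Submodule.orthogonalProjectionOnto Xn xdag : X) := by
  have hQy : Qn y = Tn xdag := by rw [hy, hTn]; rfl
  have hker : Tn.ker = Xnᗮ := by
    have hQn' : Qn = Yn.starProjection := ContinuousLinearMap.ext hQn
    rw [hTn, hQn', hXn, Submodule.ker_starProjection_comp]
  have hlsq (w : X) : (∀ w', ‖Tn w - Qn y‖ ≤ ‖Tn w' - Qn y‖) ↔ w - xdag ∈ Xnᗮ := by
    rw [hQy, ← hker, LinearMap.mem_ker, coe_coe, map_sub]
    refine ⟨fun h ↦ by simpa using h xdag, fun h w' ↦ by simp [h]⟩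
  exact Xn.eq_starProjection_of_norm_le ((hlsq xn).1 hls) fun w hw ↦ hmn w ((hlsq w).2 hw)

/-- Dual least-squares projection identity: with `T_n = Q_n T` for the orthogonal
projection `Q_n` onto a finite-dimensional subspace `Y_n ⊆ closure R(T)`,
`X_n = T*(Y_n)` with orthogonal projection `P_n`, and `y = T x†` for
`x† ∈ N(T)^⊥`, the minimum norm solution `x_n` of `T_n x = Q_n y` equals `P_n x†`. -/
theorem dual_least_squares_projection
    {X Y : Type*} [NormedAddCommGroup X] [InnerProductSpace ℝ X] [CompleteSpace X]
    [NormedAddCommGroup Y] [InnerProductSpace ℝ Y] [CompleteSpace Y]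
    (T : X →L[ℝ] Y)
    (Yn : Submodule ℝ Y) [FiniteDimensional ℝ Yn]
    (hYn : (Yn : Set Y) ⊆ closure (Set.range ⇑T))
    (Xn : Submodule ℝ X) [FiniteDimensional ℝ Xn]
    (hXn : Xn = Submodule.map (ContinuousLinearMap.adjoint T : Y →ₗ[ℝ] X) Yn)
    (xdag : X) (hxdag : xdag ∈ (LinearMap.ker (T : X →ₗ[ℝ] Y))ᗮ)
    (y : Y) (hy : y = T xdag)
    (Qn : Y →L[ℝ] Y) (hQn : ∀ w : Y, Qn w = (Submodule.orthogonalProjectionOnto Yn w : Y))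
    (Tn : X →L[ℝ] Y) (hTn : Tn = Qn.comp T)
    (xn : X)
    (hls : ∀ w : X, ‖Tn xn - Qn y‖ ≤ ‖Tn w - Qn y‖)
    (hmn : ∀ w : X, (∀ w' : X, ‖Tn w - Qn y‖ ≤ ‖Tn w' - Qn y‖) → ‖xn‖ ≤ ‖w‖) :
    xn = (Submodule.orthogonalProjectionOnto Xn xdag : X) :=
  dual_least_squares_projection_general T Yn Xn hXn xdag y hy Qn hQn Tn hTn xn hls hmn
end
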